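/- arXiv:1908.09034 — 5 statements merged into one kernel-verified Lean document; each statement's English description precedes it below -/
import Mathlib

section
/- Let x > 0 be a real number. The function u ↦ (x − u)²·u + (4/27)·(x − 2u)³, restricted to the interval [0, x/2], attains its maximum at u = x/5, and the maximum value equals (4/25)·x³. -/
/-! The gap to the claimed maximum factors as
`f (x/5) - f u = (u - x/5)² (5u + 8x) / 27`: the double root at `u = x/5` makes it a maximum
as long as the linear factor `5u + 8x` is nonnegative, which holds on `[0, x/2]`. -/

noncomputable def twoTurbinePower (x u : ℝ) : ℝ :=
  (x - u) ^ 2 * u + 4 / 27 * (x - 2 * u) ^ 3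

theorem twoTurbinePower_fifth_sub (x u : ℝ) :
    twoTurbinePower x (x / 5) - twoTurbinePower x u = (u - x / 5) ^ 2 * (5 * u + 8 * x) / 27 := by
  unfold twoTurbinePower
  ring

theorem twoTurbinePower_le_fifth {x u : ℝ} (h : 0 ≤ 5 * u + 8 * x) :
    twoTurbinePower x u ≤ twoTurbinePower x (x / 5) := by
  have hgap : 0 ≤ (u - x / 5) ^ 2 * (5 * u + 8 * x) / 27 := by positivity
  linarith [twoTurbinePower_fifth_sub x u]

theorem twoTurbinePower_fifth (x : ℝ) : twoTurbinePower x (x / 5) = 4 / 25 * x ^ 3 := by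
  unfold twoTurbinePower
  ring

/-- For `x > 0`, the function `u ↦ (x − u)² * u + (4/27) * (x − 2u)³` on `[0, x/2]`
attains its maximum at `u = x/5`, with maximum value `(4/25) * x³`. -/
theorem stmt_1 (x : ℝ) (hx : 0 < x) :
    x / 5 ∈ Set.Icc (0 : ℝ) (x / 2) ∧
    IsMaxOn (fun u : ℝ => (x - u) ^ 2 * u + 4 / 27 * (x - 2 * u) ^ 3)
      (Set.Icc 0 (x / 2)) (x / 5) ∧
    (x - x / 5) ^ 2 * (x / 5) + 4 / 27 * (x - 2 * (x / 5)) ^ 3 = 4 / 25 * x ^ 3 :=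
  ⟨⟨by positivity, by linarith⟩,
    fun u hu => twoTurbinePower_le_fifth (by linarith [hu.1]),
    twoTurbinePower_fifth x⟩
end

section
/- Let N be a natural number and define functions V_k : {x : ℝ | x ≥ 0} → ℝ for k = 0,…,N by the backward recursion V_N(x) := 0 and V_k(x) := sup { (x − u)²·u + V_{k+1}(x − 2u) : u ∈ [0, x/2] } for k = N−1,…,0. Then each V_k is positively homogeneous of degree 3: for every λ ≥ 0 and every x ≥ 0, V_k(λ·x) = λ³·V_k(x). -/
/-!
The Bellman operator commutes with the scaling `x ↦ λ x`: substituting `u = λ v` maps the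
control interval `[0, x/2]` onto `[0, λx/2]`, the stage power `(x - u)² u` is cubic, and the next
state `x - 2u` scales linearly, so a degree-3 homogeneous continuation value yields a degree-3
homogeneous value. Backward induction from `V N = 0` finishes the argument.
-/

open Set

def IsPosHomogeneous (d : ℕ) (f : ℝ → ℝ) : Prop :=
  ∀ lam : ℝ, 0 ≤ lam → ∀ x : ℝ, 0 ≤ x → f (lam * x) = lam ^ d * f x

noncomputable def bellman (W : ℝ → ℝ) (x : ℝ) : ℝ :=
  sSup ((fun u : ℝ => (x - u) ^ 2 * u + W (x - 2 * u)) '' Icc 0 (x / 2))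

/-- Also for empty or unbounded `s`, where both sides are the junk value `0`; so no bound on
the value functions is needed. -/
theorem Real.sSup_image_mul_left_of_nonneg {a : ℝ} (ha : 0 ≤ a) (s : Set ℝ) :
    sSup ((a * ·) '' s) = a * sSup s :=
  Real.sSup_smul_of_nonneg ha s

theorem IsPosHomogeneous.bellman {W : ℝ → ℝ} (hW : IsPosHomogeneous 3 W) :
    IsPosHomogeneous 3 (bellman W) := by
  intro lam hlam x hx
  have hcontrols : Icc 0 (lam * x / 2) = (lam * ·) '' Icc 0 (x / 2) := by
    rw [image_mul_left_Icc hlam (by positivity), mul_zero, mul_div_assoc]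
  have hstage : ∀ v ∈ Icc 0 (x / 2),
      (lam * x - lam * v) ^ 2 * (lam * v) + W (lam * x - 2 * (lam * v)) =
        lam ^ 3 * ((x - v) ^ 2 * v + W (x - 2 * v)) := by
    rintro v ⟨-, hv⟩
    rw [show lam * x - 2 * (lam * v) = lam * (x - 2 * v) by ring,
      hW lam hlam _ (by linarith)]
    ring
  rw [_root_.bellman, _root_.bellman, hcontrols, image_image, image_congr hstage,
    ← image_image (lam ^ 3 * ·), Real.sSup_image_mul_left_of_nonneg (by positivity)]

/-- The deterministic dynamic-programming value functions
`V N x = 0`, `V k x = sup { (x−u)²u + V (k+1) (x−2u) : u ∈ [0, x/2] }` (for `x ≥ 0`)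
are positively homogeneous of degree 3 on nonnegative states. -/
theorem stmt_2 (N : ℕ) (V : ℕ → ℝ → ℝ)
    (hVN : ∀ x : ℝ, 0 ≤ x → V N x = 0)
    (hV : ∀ k < N, ∀ x : ℝ, 0 ≤ x →
      V k x = sSup ((fun u : ℝ => (x - u) ^ 2 * u + V (k + 1) (x - 2 * u)) ''
        Set.Icc 0 (x / 2))) :
    ∀ k ≤ N, ∀ lam : ℝ, 0 ≤ lam → ∀ x : ℝ, 0 ≤ x →
      V k (lam * x) = lam ^ 3 * V k x := by
  show ∀ k ≤ N, IsPosHomogeneous 3 (V k)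
  intro k hk
  induction hk using Nat.decreasingInduction with
  | self =>
    intro lam hlam x hx
    rw [hVN _ (by positivity), hVN x hx, mul_zero]
  | of_succ k hk ih =>
    have hbellman : ∀ y, 0 ≤ y → V k y = bellman (V (k + 1)) y := hV k hk
    intro lam hlam x hx
    rw [hbellman _ (by positivity), hbellman x hx, ih.bellman lam hlam x hx]
end

section
/- Fix N ∈ ℕ and real sequences μ_{a,k}, Σ_{a,k}, Γ_{a,k}, μ_{b,k}, Σ_{b,k}, Γ_{b,k} for k = 0,…,N−1. Define backward: Q_N := 0 and, for k = N−1,…,0, A_k := Q_{k+1}·Γ_{b,k} + 1, B_k := 3·Q_{k+1}·Σ_{b,k}·μ_{a,k} − 2, C_k := 3·Q_{k+1}·Σ_{a,k}·μ_{b,k} + 1, D_k := B_k² − 3·A_k·C_k, ψ_k := −(B_k + √D_k)/(3·A_k), ψ̄_k := (−B_k + √D_k)/(3·A_k), and Q_k := (1 − ψ_k)²·ψ_k + Q_{k+1}·(Γ_{a,k} + Γ_{b,k}·ψ_k³ + 3·Σ_{b,k}·μ_{a,k}·ψ_k² + 3·Σ_{a,k}·μ_{b,k}·ψ_k). On a probability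 space, for each k let a_k, b_k be independent real-valued random variables with finite third absolute moments and raw moments E[a_k] = μ_{a,k}, E[a_k²] = Σ_{a,k}, E[a_k³] = Γ_{a,k}, E[b_k] = μ_{b,k}, E[b_k²] = Σ_{b,k}, E[b_k³] = Γ_{b,k}. Define V_N : ℝ → ℝ by V_N := 0 and, for k = N−1,…,0, V_k(x) := sup { (x − u)²·u + E[V_{k+1}(a_k·x + b_k·u)] : u ∈ [0, x/2] } for x ≥ 0, and V_k(x) := Q_k·x³ for x < 0. Assume for every k that A_k > 0, D_k ≥ 0, 0 ≤ ψ_k ≤ 1/2, and ψ̄_k ≥ 1/2. Then for every k and every x ≥ 0, V_k(x) = Q_k·x³, and the supremum defining V_k(x) is attained at u = ψ_k·x. -/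
/-! Backward induction on `k`. If `V (k + 1) y = Q (k + 1) * y ^ 3` for every `y`, independence of
`a k` and `b k` turns the stage objective `u ↦ (x - u) ^ 2 * u + E[V (k + 1) (a k * x + b k * u)]`
into the cubic `F u = A u³ + B x u² + C x² u + Q (k + 1) Ga x³`. The derivative of `F` vanishes at
`ψ x` and `ψbar x`, whence `F (ψ x) - F u = A (ψ x - u)² ((3 ψbar - ψ) x / 2 - u)`, which is
nonnegative for `u ≤ x / 2` because `ψ ≤ 1 / 2 ≤ ψbar`. So the supremum is attained at `ψ x`, with
value `Q k * x ^ 3`; for `x < 0` the cubic form holds by definition of `V`. -/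

open MeasureTheory ProbabilityTheory

lemma cubic_coeffs_of_critical_points {A B C D p q : ℝ} (hA : A ≠ 0) (hD₀ : 0 ≤ D)
    (hD : D = B ^ 2 - 3 * A * C) (hp : p = -(B + √D) / (3 * A))
    (hq : q = (-B + √D) / (3 * A)) :
    B = -3 * A * (p + q) / 2 ∧ C = 3 * A * p * q := by
  have h3A : 3 * A ≠ 0 := by positivity
  have hsq : √D ^ 2 = D := Real.sq_sqrt hD₀
  rw [hp, hq]
  constructor
  · field_simp; ring
  · field_simp; linear_combination hsq + hD

lemma cubic_le_of_critical_points {A B C p q x u : ℝ} (hA : 0 ≤ A)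
    (hB : B = -3 * A * (p + q) / 2) (hC : C = 3 * A * p * q) (hu : u ≤ (3 * q - p) * x / 2) :
    A * u ^ 3 + B * x * u ^ 2 + C * x ^ 2 * u ≤
      A * (p * x) ^ 3 + B * x * (p * x) ^ 2 + C * x ^ 2 * (p * x) := by
  have hdiff : A * (p * x) ^ 3 + B * x * (p * x) ^ 2 + C * x ^ 2 * (p * x)
      - (A * u ^ 3 + B * x * u ^ 2 + C * x ^ 2 * u)
      = A * (p * x - u) ^ 2 * ((3 * q - p) * x / 2 - u) := by
    rw [hB, hC]; ring
  have : 0 ≤ A * (p * x - u) ^ 2 * ((3 * q - p) * x / 2 - u) := by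
    have := sub_nonneg.2 hu
    positivity
  linarith

section Moments

variable {Ω : Type*} [MeasurableSpace Ω] {μ : Measure Ω}

lemma integrable_pow_of_integrable_abs_pow [IsFiniteMeasure μ] {X : Ω → ℝ} {m n : ℕ}
    (hX : AEStronglyMeasurable X μ) (hn : Integrable (fun ω ↦ |X ω| ^ n) μ) (hmn : m ≤ n) :
    Integrable (fun ω ↦ X ω ^ m) μ := by
  refine ((integrable_const 1).add hn).mono' (hX.pow m) (ae_of_all _ fun ω ↦ ?_)
  simp only [Pi.add_apply, Real.norm_eq_abs, abs_pow]
  rcases le_total |X ω| 1 with h | h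
  · have := pow_le_one₀ (abs_nonneg (X ω)) h (n := m)
    have := pow_nonneg (abs_nonneg (X ω)) n
    linarith
  · have := pow_le_pow_right₀ h hmn
    linarith

theorem ProbabilityTheory.IndepFun.integral_mul_add_mul_pow [IsProbabilityMeasure μ]
    {a b : Ω → ℝ} {n : ℕ}
    (hab : IndepFun a b μ) (ha : AEMeasurable a μ) (hb : AEMeasurable b μ)
    (ha_n : Integrable (fun ω ↦ |a ω| ^ n) μ) (hb_n : Integrable (fun ω ↦ |b ω| ^ n) μ)
    (x u : ℝ) :
    ∫ ω, (a ω * x + b ω * u) ^ n ∂μ = ∑ j ∈ Finset.range (n + 1),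
      (∫ ω, a ω ^ j ∂μ) * (∫ ω, b ω ^ (n - j) ∂μ) * x ^ j * u ^ (n - j) * n.choose j := by
  have hterm : ∀ j ∈ Finset.range (n + 1), Integrable (fun ω ↦ a ω ^ j * b ω ^ (n - j)) μ := by
    intro j hj
    exact (hab.comp (measurable_id.pow_const j) (measurable_id.pow_const (n - j))).integrable_mul
      (integrable_pow_of_integrable_abs_pow ha.aestronglyMeasurable ha_n
        (Finset.mem_range_succ_iff.1 hj))
      (integrable_pow_of_integrable_abs_pow hb.aestronglyMeasurable hb_n (Nat.sub_le n j))
  have hexpand : ∀ ω, (a ω * x + b ω * u) ^ n = ∑ j ∈ Finset.range (n + 1),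
      x ^ j * u ^ (n - j) * n.choose j * (a ω ^ j * b ω ^ (n - j)) := fun ω ↦ by
    rw [add_pow]; exact Finset.sum_congr rfl fun j _ ↦ by ring
  simp_rw [hexpand]
  rw [integral_finsetSum _ fun j hj ↦ (hterm j hj).const_mul _]
  refine Finset.sum_congr rfl fun j _ ↦ ?_
  rw [integral_const_mul, hab.integral_fun_comp_mul_comp ha hb (f := (· ^ j)) (g := (· ^ (n - j)))
    (by fun_prop) (by fun_prop)]
  ring

end Moments

section Stage

variable {Ω : Type*} [MeasurableSpace Ω] {μ : Measure Ω} [IsProbabilityMeasure μ] {a b : Ω → ℝ}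
  {μa Sa Ga μb Sb Gb Q Q' A B C : ℝ} {W : ℝ → ℝ}

lemma stage_objective_eq (hab : IndepFun a b μ) (ha : AEMeasurable a μ) (hb : AEMeasurable b μ)
    (ha3 : Integrable (fun ω ↦ |a ω| ^ 3) μ) (hb3 : Integrable (fun ω ↦ |b ω| ^ 3) μ)
    (hμa : ∫ ω, a ω ∂μ = μa) (hSa : ∫ ω, a ω ^ 2 ∂μ = Sa) (hGa : ∫ ω, a ω ^ 3 ∂μ = Ga)
    (hμb : ∫ ω, b ω ∂μ = μb) (hSb : ∫ ω, b ω ^ 2 ∂μ = Sb) (hGb : ∫ ω, b ω ^ 3 ∂μ = Gb)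
    (hA : A = Q' * Gb + 1) (hB : B = 3 * Q' * Sb * μa - 2) (hC : C = 3 * Q' * Sa * μb + 1)
    (hW : ∀ y, W y = Q' * y ^ 3) (x u : ℝ) :
    (x - u) ^ 2 * u + ∫ ω, W (a ω * x + b ω * u) ∂μ =
      A * u ^ 3 + B * x * u ^ 2 + C * x ^ 2 * u + Q' * Ga * x ^ 3 := by
  simp_rw [hW]
  rw [integral_const_mul, hab.integral_mul_add_mul_pow ha hb ha3 hb3]
  simp only [Finset.sum_range_succ, Finset.range_one, Finset.sum_singleton, pow_zero, pow_one,
    integral_const, probReal_univ, smul_eq_mul, Nat.reduceAdd, Nat.reduceSub, tsub_zero, tsub_self,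
    Nat.choose_zero_right, Nat.choose_one_right, Nat.choose_succ_self_right, Nat.choose_self,
    Nat.cast_one, Nat.cast_ofNat, hμa, hSa, hGa, hμb, hSb, hGb, hA, hB, hC]
  ring

theorem stage_optimal {D p q : ℝ} (hab : IndepFun a b μ) (ha : AEMeasurable a μ)
    (hb : AEMeasurable b μ)
    (ha3 : Integrable (fun ω ↦ |a ω| ^ 3) μ) (hb3 : Integrable (fun ω ↦ |b ω| ^ 3) μ)
    (hμa : ∫ ω, a ω ∂μ = μa) (hSa : ∫ ω, a ω ^ 2 ∂μ = Sa) (hGa : ∫ ω, a ω ^ 3 ∂μ = Ga)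
    (hμb : ∫ ω, b ω ∂μ = μb) (hSb : ∫ ω, b ω ^ 2 ∂μ = Sb) (hGb : ∫ ω, b ω ^ 3 ∂μ = Gb)
    (hA : A = Q' * Gb + 1) (hB : B = 3 * Q' * Sb * μa - 2) (hC : C = 3 * Q' * Sa * μb + 1)
    (hD : D = B ^ 2 - 3 * A * C) (hp : p = -(B + √D) / (3 * A))
    (hq : q = (-B + √D) / (3 * A)) (hA₀ : 0 < A) (hD₀ : 0 ≤ D) (hp₀ : 0 ≤ p)
    (hp_le : p ≤ 1 / 2) (hq_ge : 1 / 2 ≤ q)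
    (hQ : Q = (1 - p) ^ 2 * p + Q' * (Ga + Gb * p ^ 3 + 3 * Sb * μa * p ^ 2 + 3 * Sa * μb * p))
    (hW : ∀ y, W y = Q' * y ^ 3) {x : ℝ} (hx : 0 ≤ x) :
    p * x ∈ Set.Icc 0 (x / 2) ∧
    IsMaxOn (fun u ↦ (x - u) ^ 2 * u + ∫ ω, W (a ω * x + b ω * u) ∂μ) (Set.Icc 0 (x / 2))
      (p * x) ∧
    (x - p * x) ^ 2 * (p * x) + ∫ ω, W (a ω * x + b ω * (p * x)) ∂μ = Q * x ^ 3 := by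
  have hobj := stage_objective_eq hab ha hb ha3 hb3 hμa hSa hGa hμb hSb hGb hA hB hC hW x
  obtain ⟨hBpq, hCpq⟩ := cubic_coeffs_of_critical_points hA₀.ne' hD₀ hD hp hq
  refine ⟨⟨by positivity, by nlinarith⟩, fun u ⟨_, hu⟩ ↦ ?_, ?_⟩
  · simp only [Set.mem_ofPred_eq, hobj]
    have := cubic_le_of_critical_points hA₀.le hBpq hCpq (x := x) (u := u) (by nlinarith)
    linarith
  · rw [hobj, hQ, hA, hB, hC]
    ring

end Stage

/-- Multi-stage stochastic DP for wind farm power maximization (Theorem 1):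
the value functions are cubic, `V_k(x) = Q_k·x³` for `x ≥ 0`, and the supremum in the
dynamic-programming recursion is attained at the linear feedback `u = ψ_k·x`. -/
theorem stmt_6 {Ω : Type*} [MeasurableSpace Ω] (μ : Measure Ω) [IsProbabilityMeasure μ]
    (N : ℕ) (μa Sa Ga μb Sb Gb : ℕ → ℝ)
    (a b : ℕ → Ω → ℝ)
    (hameas : ∀ k < N, Measurable (a k)) (hbmeas : ∀ k < N, Measurable (b k))
    (hindep : ∀ k < N, IndepFun (a k) (b k) μ)
    (ha3 : ∀ k < N, Integrable (fun ω => |a k ω| ^ 3) μ)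
    (hb3 : ∀ k < N, Integrable (fun ω => |b k ω| ^ 3) μ)
    (hμa : ∀ k < N, ∫ ω, a k ω ∂μ = μa k)
    (hSa : ∀ k < N, ∫ ω, (a k ω) ^ 2 ∂μ = Sa k)
    (hGa : ∀ k < N, ∫ ω, (a k ω) ^ 3 ∂μ = Ga k)
    (hμb : ∀ k < N, ∫ ω, b k ω ∂μ = μb k)
    (hSb : ∀ k < N, ∫ ω, (b k ω) ^ 2 ∂μ = Sb k)
    (hGb : ∀ k < N, ∫ ω, (b k ω) ^ 3 ∂μ = Gb k)
    (Q A B C D ψ ψbar : ℕ → ℝ)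
    (hQN : Q N = 0)
    (hA : ∀ k < N, A k = Q (k + 1) * Gb k + 1)
    (hB : ∀ k < N, B k = 3 * Q (k + 1) * Sb k * μa k - 2)
    (hC : ∀ k < N, C k = 3 * Q (k + 1) * Sa k * μb k + 1)
    (hD : ∀ k < N, D k = B k ^ 2 - 3 * A k * C k)
    (hψ : ∀ k < N, ψ k = -(B k + Real.sqrt (D k)) / (3 * A k))
    (hψbar : ∀ k < N, ψbar k = (-(B k) + Real.sqrt (D k)) / (3 * A k))
    (hQ : ∀ k < N, Q k = (1 - ψ k) ^ 2 * ψ k +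
      Q (k + 1) * (Ga k + Gb k * ψ k ^ 3 + 3 * Sb k * μa k * ψ k ^ 2
        + 3 * Sa k * μb k * ψ k))
    (V : ℕ → ℝ → ℝ)
    (hVN : ∀ x : ℝ, V N x = 0)
    (hV : ∀ k < N, ∀ x : ℝ, 0 ≤ x →
      V k x = sSup ((fun u : ℝ =>
        (x - u) ^ 2 * u + ∫ ω, V (k + 1) (a k ω * x + b k ω * u) ∂μ) ''
        Set.Icc 0 (x / 2)))
    (hVneg : ∀ k < N, ∀ x : ℝ, x < 0 → V k x = Q k * x ^ 3)
    (hApos : ∀ k < N, 0 < A k) (hDnn : ∀ k < N, 0 ≤ D k)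
    (hψ0 : ∀ k < N, 0 ≤ ψ k) (hψhalf : ∀ k < N, ψ k ≤ 1 / 2)
    (hψbar_ge : ∀ k < N, 1 / 2 ≤ ψbar k) :
    (∀ k ≤ N, ∀ x : ℝ, 0 ≤ x → V k x = Q k * x ^ 3) ∧
    (∀ k < N, ∀ x : ℝ, 0 ≤ x →
      ψ k * x ∈ Set.Icc (0 : ℝ) (x / 2) ∧
      (x - ψ k * x) ^ 2 * (ψ k * x)
        + (∫ ω, V (k + 1) (a k ω * x + b k ω * (ψ k * x)) ∂μ) = V k x) := by
  have stage : ∀ k < N, (∀ y, V (k + 1) y = Q (k + 1) * y ^ 3) → ∀ x : ℝ, 0 ≤ x →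
      ψ k * x ∈ Set.Icc 0 (x / 2) ∧
      IsMaxOn (fun u ↦ (x - u) ^ 2 * u + ∫ ω, V (k + 1) (a k ω * x + b k ω * u) ∂μ)
        (Set.Icc 0 (x / 2)) (ψ k * x) ∧
      (x - ψ k * x) ^ 2 * (ψ k * x) + ∫ ω, V (k + 1) (a k ω * x + b k ω * (ψ k * x)) ∂μ =
        Q k * x ^ 3 :=
    fun k hk hW x hx ↦ stage_optimal (hindep k hk) (hameas k hk).aemeasurable
      (hbmeas k hk).aemeasurable (ha3 k hk) (hb3 k hk) (hμa k hk) (hSa k hk) (hGa k hk)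
      (hμb k hk) (hSb k hk) (hGb k hk) (hA k hk) (hB k hk) (hC k hk) (hD k hk) (hψ k hk)
      (hψbar k hk) (hApos k hk) (hDnn k hk) (hψ0 k hk) (hψhalf k hk) (hψbar_ge k hk) (hQ k hk) hW hx
  have hcubic : ∀ k ≤ N, ∀ y, V k y = Q k * y ^ 3 := by
    intro k hk
    induction hk using Nat.decreasingInduction with
    | self => simp [hVN, hQN]
    | of_succ k hk hW =>
      intro y
      rcases lt_or_ge y 0 with hy | hy
      · exact hVneg k hk y hy
      obtain ⟨hmem, hmax, hval⟩ := stage k hk hW y hy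
      rw [hV k hk y hy, ← hval]
      exact IsGreatest.csSup_eq ⟨Set.mem_image_of_mem _ hmem, Set.forall_mem_image.2 hmax⟩
  refine ⟨fun k hk x _ ↦ hcubic k hk x, fun k hk x hx ↦ ?_⟩
  obtain ⟨hmem, -, hval⟩ := stage k hk (hcubic (k + 1) hk) x hx
  exact ⟨hmem, hval.trans (hcubic k hk.le x).symm⟩
end

section
/- On a probability space, let a_0, b_0, …, a_{N−1}, b_{N−1} be mutually independent real-valued random variables, each with finite third absolute moment, and for each k set M_k(γ) := E[(a_k + b_k·γ)³]. Let γ_0, …, γ_{N−1} be real numbers, let x_0 ∈ ℝ be deterministic, and define x_{k+1} := (a_k + b_k·γ_k)·x_k. Define R_N := 0 and R_k := (1 − γ_k)²·γ_k + R_{k+1}·M_k(γ_k) backward for k = N−1,…,0. Then E[ Σ_{k=0}^{N−1} (x_k − γ_k·x_k)²·(γ_k·x_k) ] = R_0 · x_0³. -/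
/-!
Unrolling the cascade gives `x_k = x₀ ∏_{j<k} (a_j + b_j γ_j)`, so the `k`-th summand is
`(1 - γ_k)² γ_k x₀³ ∏_{j<k} (a_j + b_j γ_j)³`. The gains of distinct turbines are independent
random variables with finite third moments, hence the expectation of this product is
`∏_{j<k} M_j(γ_j)`. Unrolling the backward recursion gives the same expression for `R₀`:
`R₀ = ∑_{k<N} (1 - γ_k)² γ_k ∏_{j<k} M_j(γ_j)`.
-/

open MeasureTheory ProbabilityTheory Finset

lemma eq_prod_range_mul_of_succ_eq_mul {α : Type*} [CommMonoid α] {x c : ℕ → α} {N : ℕ}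
    (hx : ∀ k < N, x (k + 1) = c k * x k) {k : ℕ} (hk : k ≤ N) :
    x k = (∏ j ∈ range k, c j) * x 0 := by
  induction k with
  | zero => simp
  | succ k ih => rw [hx k hk, ih (by omega), prod_range_succ]; ac_rfl

lemma eq_sum_prod_of_backward_recursion {α : Type*} [CommSemiring α] {R f m : ℕ → α} {N : ℕ}
    (hR : ∀ k < N, R k = f k + R (k + 1) * m k) (hN : R N = 0) :
    R 0 = ∑ k ∈ range N, f k * ∏ j ∈ range k, m j := by
  suffices ∀ n ≤ N, R 0 = ∑ k ∈ range n, f k * ∏ j ∈ range k, m j + R n * ∏ j ∈ range n, m j by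
    simpa [hN] using this N le_rfl
  intro n hn
  induction n with
  | zero => simp
  | succ n ih =>
    rw [ih (by omega), hR n (by omega), sum_range_succ, prod_range_succ]
    ring

section Moments

variable {Ω : Type*} [MeasurableSpace Ω] {μ : Measure Ω} {p : ℕ}

lemma memLp_of_integrable_abs_pow (hp : p ≠ 0) {f : Ω → ℝ} (hf : AEStronglyMeasurable f μ)
    (h : Integrable (fun ω => |f ω| ^ p) μ) : MemLp f p μ := by
  rw [← integrable_norm_rpow_iff hf (by exact_mod_cast hp) (by simp)]
  simpa using h

lemma integrable_pow_add_mul (hp : p ≠ 0) {f g : Ω → ℝ} (hf : Measurable f) (hg : Measurable g)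
    (hfp : Integrable (fun ω => |f ω| ^ p) μ) (hgp : Integrable (fun ω => |g ω| ^ p) μ) (t : ℝ) :
    Integrable (fun ω => (f ω + g ω * t) ^ p) μ := by
  have hLp : MemLp (fun ω => f ω + g ω * t) p μ :=
    (memLp_of_integrable_abs_pow hp hf.aestronglyMeasurable hfp).add
      ((memLp_of_integrable_abs_pow hp hg.aestronglyMeasurable hgp).mul_const t)
  rw [← integrable_norm_iff (by fun_prop)]
  simpa only [norm_pow] using hLp.integrable_norm_pow hp

end Moments

namespace ProbabilityTheory

variable {Ω : Type*} [MeasurableSpace Ω] {μ : Measure Ω}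

lemma iIndepFun.curry {ι κ 𝓧 : Type*} [MeasurableSpace 𝓧] {X : ι → κ → Ω → 𝓧}
    (mX : ∀ i j, Measurable (X i j)) (h : iIndepFun (fun p : ι × κ => X p.1 p.2) μ) :
    iIndepFun (fun i ω j => X i j ω) μ := by
  have := h.isProbabilityMeasure
  have (i : ι) (j : κ) : IsProbabilityMeasure (μ.map (X i j)) :=
    Measure.isProbabilityMeasure_map (mX i j).aemeasurable
  have hrow (i : ι) :
      μ.map (fun ω j => X i j ω) = Measure.infinitePi (fun j => μ.map (X i j)) :=
    (h.precomp (Prod.mk_right_injective i)).map_fun_eq_infinitePi_map (mX i)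
  have hjoint : μ.map (fun ω (p : ι × κ) => X p.1 p.2 ω)
      = Measure.infinitePi (fun p : ι × κ => μ.map (X p.1 p.2)) :=
    h.map_fun_eq_infinitePi_map (fun p => mX p.1 p.2)
  rw [iIndepFun_iff_map_fun_eq_infinitePi_map (fun i => measurable_pi_lambda _ (mX i))]
  simp_rw [hrow]
  rw [← Measure.infinitePi_map_curry, ← hjoint, Measure.map_map (by fun_prop) (by fun_prop)]
  rfl

lemma iIndepFun.comp_pair {ι 𝓧 𝓨 : Type*} [MeasurableSpace 𝓧] [MeasurableSpace 𝓨]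
    {a b : ι → Ω → 𝓧} (ha : ∀ i, Measurable (a i)) (hb : ∀ i, Measurable (b i))
    (h : iIndepFun (fun p : ι × Bool => if p.2 then b p.1 else a p.1) μ)
    {g : ι → 𝓧 × 𝓧 → 𝓨} (hg : ∀ i, Measurable (g i)) :
    iIndepFun (fun i ω => g i (a i ω, b i ω)) μ := by
  have mX (i : ι) (j : Bool) : Measurable (if j then b i else a i) := by
    cases j
    · exact ha i
    · exact hb i
  exact (h.curry (X := fun i j => if j then b i else a i) mX).comp
    (fun i v => g i (v false, v true)) fun i => by fun_prop

lemma iIndepFun.integrable_finset_prod {ι : Type*} {Z : ι → Ω → ℝ} (h : iIndepFun Z μ)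
    (hm : ∀ i, Measurable (Z i)) (hint : ∀ i, Integrable (Z i) μ) (s : Finset ι) :
    Integrable (fun ω => ∏ i ∈ s, Z i ω) μ := by
  classical
  have := h.isProbabilityMeasure
  induction s using Finset.induction_on with
  | empty => simp
  | insert i s hi ih =>
    simp_rw [prod_insert hi]
    rw [← prod_fn] at ih
    convert (h.indepFun_finsetProd_of_notMem hm hi).symm.integrable_mul (hint i) ih using 1
    ext ω
    simp only [Pi.mul_apply, prod_apply]

variable {N k : ℕ} {Z : ℕ → Ω → ℝ}

lemma iIndepFun.integrable_prod_range (h : iIndepFun (fun (i : Fin N) => Z i) μ)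
    (hm : ∀ i < N, Measurable (Z i)) (hint : ∀ i < N, Integrable (Z i) μ) (hk : k ≤ N) :
    Integrable (fun ω => ∏ j ∈ range k, Z j ω) μ := by
  simp only [← Fin.prod_univ_eq_prod_range]
  exact (h.precomp (Fin.castLE_injective hk)).integrable_finset_prod
    (fun i => hm i (by omega)) (fun i => hint i (by omega)) univ

lemma iIndepFun.integral_prod_range (h : iIndepFun (fun (i : Fin N) => Z i) μ)
    (hm : ∀ i < N, Measurable (Z i)) (hk : k ≤ N) :
    ∫ ω, ∏ j ∈ range k, Z j ω ∂μ = ∏ j ∈ range k, ∫ ω, Z j ω ∂μ := by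
  simp only [← Fin.prod_univ_eq_prod_range]
  exact (h.precomp (Fin.castLE_injective hk)).integral_fun_prod_eq_prod_integral
    fun i => (hm i (by omega)).aestronglyMeasurable

end ProbabilityTheory

theorem stmt_8_general {Ω : Type*} [MeasurableSpace Ω] (μ : Measure Ω)
    (N : ℕ) (a b : ℕ → Ω → ℝ)
    (ha : ∀ k < N, Measurable (a k)) (hb : ∀ k < N, Measurable (b k))
    (hindep : iIndepFun
      (fun p : Fin N × Bool => if p.2 then b p.1 else a p.1) μ)
    (ha3 : ∀ k < N, Integrable (fun ω => |a k ω| ^ 3) μ)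
    (hb3 : ∀ k < N, Integrable (fun ω => |b k ω| ^ 3) μ)
    (M : ℕ → ℝ → ℝ)
    (hM : ∀ k < N, ∀ γk : ℝ, M k γk = ∫ ω, (a k ω + b k ω * γk) ^ 3 ∂μ)
    (γ : ℕ → ℝ) (x0 : ℝ) (x : ℕ → Ω → ℝ)
    (hx0 : ∀ ω, x 0 ω = x0)
    (hx : ∀ k < N, ∀ ω, x (k + 1) ω = (a k ω + b k ω * γ k) * x k ω)
    (R : ℕ → ℝ)
    (hRN : R N = 0)
    (hR : ∀ k < N, R k = (1 - γ k) ^ 2 * γ k + R (k + 1) * M k (γ k)) :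
    ∫ ω, ∑ k ∈ Finset.range N,
        (x k ω - γ k * x k ω) ^ 2 * (γ k * x k ω) ∂μ = R 0 * x0 ^ 3 := by
  set Z : ℕ → Ω → ℝ := fun k ω => (a k ω + b k ω * γ k) ^ 3
  have hZ_indep : iIndepFun (fun (i : Fin N) => Z i) μ :=
    hindep.comp_pair (a := fun i : Fin N => a i) (b := fun i : Fin N => b i)
      (fun i => ha i i.2) (fun i => hb i i.2)
      (g := fun i v => (v.1 + v.2 * γ i) ^ 3) fun _ => by fun_prop
  have hZ_meas (i : ℕ) (hi : i < N) : Measurable (Z i) :=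
    ((ha i hi).add ((hb i hi).mul_const _)).pow_const 3
  have hZ_int (i : ℕ) (hi : i < N) : Integrable (Z i) μ :=
    integrable_pow_add_mul three_ne_zero (ha i hi) (hb i hi) (ha3 i hi) (hb3 i hi) _
  have hsummand {k : ℕ} (hk : k < N) (ω : Ω) :
      (x k ω - γ k * x k ω) ^ 2 * (γ k * x k ω)
        = (1 - γ k) ^ 2 * γ k * x0 ^ 3 * ∏ j ∈ range k, Z j ω := by
    rw [eq_prod_range_mul_of_succ_eq_mul (x := fun k => x k ω) (fun j hj => hx j hj ω) hk.le,
      hx0, prod_pow]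
    ring
  rw [integral_finsetSum _ fun k hk => by
    simpa only [hsummand (mem_range.1 hk)] using
      (hZ_indep.integrable_prod_range hZ_meas hZ_int (mem_range.1 hk).le).const_mul _]
  calc ∑ k ∈ range N, ∫ ω, (x k ω - γ k * x k ω) ^ 2 * (γ k * x k ω) ∂μ
      = ∑ k ∈ range N, (1 - γ k) ^ 2 * γ k * (∏ j ∈ range k, M j (γ j)) * x0 ^ 3 := by
        refine sum_congr rfl fun k hk => ?_
        have hk := mem_range.1 hk
        simp_rw [hsummand hk]
        rw [integral_const_mul, hZ_indep.integral_prod_range hZ_meas hk.le,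
          prod_congr rfl fun j hj => (hM j ((mem_range.1 hj).trans hk) (γ j)).symm]
        ring
    _ = R 0 * x0 ^ 3 := by
        rw [eq_sum_prod_of_backward_recursion (f := fun k => (1 - γ k) ^ 2 * γ k)
          (m := fun k => M k (γ k)) hR hRN, sum_mul]

/-- Under linear feedback `u_k = γ_k·x_k` with mutually independent noises, the expected
total wind-farm power `E[Σ_{k<N} (x_k − γ_k x_k)²(γ_k x_k)]` equals `R₀·x₀³`, where
`R_N = 0` and `R_k = (1 − γ_k)²γ_k + R_{k+1}·M_k(γ_k)` with `M_k(γ) = E[(a_k + b_k γ)³]`. -/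
theorem stmt_8 {Ω : Type*} [MeasurableSpace Ω] (μ : Measure Ω) [IsProbabilityMeasure μ]
    (N : ℕ) (a b : ℕ → Ω → ℝ)
    (ha : ∀ k < N, Measurable (a k)) (hb : ∀ k < N, Measurable (b k))
    (hindep : iIndepFun
      (fun p : Fin N × Bool => if p.2 then b p.1 else a p.1) μ)
    (ha3 : ∀ k < N, Integrable (fun ω => |a k ω| ^ 3) μ)
    (hb3 : ∀ k < N, Integrable (fun ω => |b k ω| ^ 3) μ)
    (M : ℕ → ℝ → ℝ)
    (hM : ∀ k < N, ∀ γk : ℝ, M k γk = ∫ ω, (a k ω + b k ω * γk) ^ 3 ∂μ)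
    (γ : ℕ → ℝ) (x0 : ℝ) (x : ℕ → Ω → ℝ)
    (hx0 : ∀ ω, x 0 ω = x0)
    (hx : ∀ k < N, ∀ ω, x (k + 1) ω = (a k ω + b k ω * γ k) * x k ω)
    (R : ℕ → ℝ)
    (hRN : R N = 0)
    (hR : ∀ k < N, R k = (1 - γ k) ^ 2 * γ k + R (k + 1) * M k (γ k)) :
    ∫ ω, ∑ k ∈ Finset.range N,
        (x k ω - γ k * x k ω) ^ 2 * (γ k * x k ω) ∂μ = R 0 * x0 ^ 3 :=
  stmt_8_general μ N a b ha hb hindep ha3 hb3 M hM γ x0 x hx0 hx R hRN hR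
end

section
/- Fix N ∈ ℕ and real sequences μ_{a,k}, Σ_{a,k}, Γ_{a,k}, μ_{b,k}, Σ_{b,k}, Γ_{b,k} for k = 0,…,N−1, and set M_k(γ) := Γ_{a,k} + Γ_{b,k}·γ³ + 3·Σ_{b,k}·μ_{a,k}·γ² + 3·Σ_{a,k}·μ_{b,k}·γ. Define backward: Q_N := 0 and, for k = N−1,…,0, A_k := Q_{k+1}·Γ_{b,k} + 1, B_k := 3·Q_{k+1}·Σ_{b,k}·μ_{a,k} − 2, C_k := 3·Q_{k+1}·Σ_{a,k}·μ_{b,k} + 1, D_k := B_k² − 3·A_k·C_k, ψ_k := −(B_k + √D_k)/(3·A_k), ψ̄_k := (−B_k + √D_k)/(3·A_k), Q_k := (1 − ψ_k)²·ψ_k + Q_{k+1}·M_k(ψ_k). Assume for every k that A_k > 0, D_k ≥ 0, 0 ≤ ψ_k ≤ 1/2, ψ̄_k ≥ 1/2, and that M_k(γ) ≥ 0 for all γ ∈ [0, 1/2]. Then for any gains γ_0, …, γ_{N−1} ∈ [0, 1/2], the coefficients defined by R_N := 0 and R_k := (1 − γ_k)²·γ_k + R_{k+1}·M_k(γ_k)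 satisfy R_0 ≤ Q_0. -/
/-!
Expanding `M_k`, the stage-`k` reward `(1 - γ)² γ + Q_{k+1} M_k(γ)` is the cubic
`A_k γ³ + B_k γ² + C_k γ` plus the constant `Q_{k+1} Γ_{a,k}`, and `ψ_k`, `ψ̄_k` are its two
critical points. A cubic with positive leading coefficient attains at its local maximum `ψ_k`
its largest value on `(-∞, ψ̄_k] ⊇ [0, 1/2]`. Backward induction then gives `R_k ≤ Q_k`,
using `M_k(γ_k) ≥ 0` to pass from `R_{k+1} ≤ Q_{k+1}` to the stage-`k` rewards.
-/

/-- `(-B ∓ √(B² - 3AC)) / (3A)` are the smaller and larger critical points of the cubic. -/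
theorem cubic_le_at_smaller_critical_point {A B C g : ℝ} (hA : 0 < A)
    (hD : 0 ≤ B ^ 2 - 3 * A * C)
    (hg : g ≤ (-B + √(B ^ 2 - 3 * A * C)) / (3 * A)) :
    A * g ^ 3 + B * g ^ 2 + C * g ≤
      A * (-(B + √(B ^ 2 - 3 * A * C)) / (3 * A)) ^ 3
        + B * (-(B + √(B ^ 2 - 3 * A * C)) / (3 * A)) ^ 2
        + C * (-(B + √(B ^ 2 - 3 * A * C)) / (3 * A)) := by
  set s := √(B ^ 2 - 3 * A * C)
  set p := -(B + s) / (3 * A) with hp_def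
  have hs : 0 ≤ s := Real.sqrt_nonneg _
  have hs_sq : s ^ 2 = B ^ 2 - 3 * A * C := Real.sq_sqrt hD
  have hp : 3 * A * p = -(B + s) := by rw [hp_def]; field_simp
  have hAg : 3 * A * g ≤ -B + s := by rwa [le_div_iff₀ (by positivity), mul_comm] at hg
  clear_value p s
  have hcrit : 3 * A * p ^ 2 + 2 * B * p + C = 0 := by
    have : 3 * A * (3 * A * p ^ 2 + 2 * B * p + C) = 0 := by
      linear_combination (3 * A * p + B - s) * hp + hs_sq
    simpa [hA.ne'] using this
  -- `f p - f g = (p - g)² · (-(A g + 2 A p + B))` since `f' p = 0`, and the last factor is `≥ s/3`.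
  have hfactor : 0 ≤ -(A * g + 2 * A * p + B) := by linarith
  nlinarith [mul_nonneg (sq_nonneg (p - g)) hfactor]

theorem stmt_9_general (N : ℕ) (μa Sa Ga μb Sb Gb : ℕ → ℝ)
    (M : ℕ → ℝ → ℝ)
    (hM : ∀ k < N, ∀ γ : ℝ, M k γ =
      Ga k + Gb k * γ ^ 3 + 3 * Sb k * μa k * γ ^ 2 + 3 * Sa k * μb k * γ)
    (Q A B C D ψ ψbar : ℕ → ℝ)
    (hQN : Q N = 0)
    (hA : ∀ k < N, A k = Q (k + 1) * Gb k + 1)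
    (hB : ∀ k < N, B k = 3 * Q (k + 1) * Sb k * μa k - 2)
    (hC : ∀ k < N, C k = 3 * Q (k + 1) * Sa k * μb k + 1)
    (hD : ∀ k < N, D k = B k ^ 2 - 3 * A k * C k)
    (hψ : ∀ k < N, ψ k = -(B k + Real.sqrt (D k)) / (3 * A k))
    (hψbar : ∀ k < N, ψbar k = (-(B k) + Real.sqrt (D k)) / (3 * A k))
    (hQ : ∀ k < N, Q k = (1 - ψ k) ^ 2 * ψ k + Q (k + 1) * M k (ψ k))
    (hApos : ∀ k < N, 0 < A k) (hDnn : ∀ k < N, 0 ≤ D k)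
    (hψbar_ge : ∀ k < N, 1 / 2 ≤ ψbar k)
    (hMnn : ∀ k < N, ∀ γ ∈ Set.Icc (0 : ℝ) (1 / 2), 0 ≤ M k γ)
    (γ : ℕ → ℝ) (hγ : ∀ k < N, γ k ∈ Set.Icc (0 : ℝ) (1 / 2))
    (R : ℕ → ℝ)
    (hRN : R N = 0)
    (hR : ∀ k < N, R k = (1 - γ k) ^ 2 * γ k + R (k + 1) * M k (γ k)) :
    R 0 ≤ Q 0 := by
  have hstage_le : ∀ k < N, ∀ g ≤ 1 / 2, (1 - g) ^ 2 * g + Q (k + 1) * M k g ≤ Q k := by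
    intro k hk g hg
    have hcubic : ∀ x, (1 - x) ^ 2 * x + Q (k + 1) * M k x =
        A k * x ^ 3 + B k * x ^ 2 + C k * x + Q (k + 1) * Ga k := by
      intro x
      rw [hM k hk, hA k hk, hB k hk, hC k hk]
      ring
    have hD_nonneg := hD k hk ▸ hDnn k hk
    have hg_le : g ≤ (-B k + √(B k ^ 2 - 3 * A k * C k)) / (3 * A k) :=
      hg.trans (hD k hk ▸ hψbar k hk ▸ hψbar_ge k hk)
    rw [hQ k hk, hcubic, hcubic, hψ k hk, hD k hk]
    linarith [cubic_le_at_smaller_critical_point (hApos k hk) hD_nonneg hg_le]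
  refine Nat.decreasingInduction (motive := fun k _ => R k ≤ Q k)
    (fun k hk hnext => ?_) (by rw [hRN, hQN]) (Nat.zero_le N)
  calc R k = (1 - γ k) ^ 2 * γ k + R (k + 1) * M k (γ k) := hR k hk
    _ ≤ (1 - γ k) ^ 2 * γ k + Q (k + 1) * M k (γ k) := by
        gcongr
        exact hMnn k hk _ (hγ k hk)
    _ ≤ Q k := hstage_le k hk _ (hγ k hk).2

/-- The dynamic-programming gains `ψ_k` are optimal among linear feedback gain
sequences: for any gains `γ_k ∈ [0, 1/2]`, the induced expected-power coefficient
`R_0` is at most the optimal coefficient `Q_0`. -/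
theorem stmt_9 (N : ℕ) (μa Sa Ga μb Sb Gb : ℕ → ℝ)
    (M : ℕ → ℝ → ℝ)
    (hM : ∀ k < N, ∀ γ : ℝ, M k γ =
      Ga k + Gb k * γ ^ 3 + 3 * Sb k * μa k * γ ^ 2 + 3 * Sa k * μb k * γ)
    (Q A B C D ψ ψbar : ℕ → ℝ)
    (hQN : Q N = 0)
    (hA : ∀ k < N, A k = Q (k + 1) * Gb k + 1)
    (hB : ∀ k < N, B k = 3 * Q (k + 1) * Sb k * μa k - 2)
    (hC : ∀ k < N, C k = 3 * Q (k + 1) * Sa k * μb k + 1)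
    (hD : ∀ k < N, D k = B k ^ 2 - 3 * A k * C k)
    (hψ : ∀ k < N, ψ k = -(B k + Real.sqrt (D k)) / (3 * A k))
    (hψbar : ∀ k < N, ψbar k = (-(B k) + Real.sqrt (D k)) / (3 * A k))
    (hQ : ∀ k < N, Q k = (1 - ψ k) ^ 2 * ψ k + Q (k + 1) * M k (ψ k))
    (hApos : ∀ k < N, 0 < A k) (hDnn : ∀ k < N, 0 ≤ D k)
    (hψ0 : ∀ k < N, 0 ≤ ψ k) (hψhalf : ∀ k < N, ψ k ≤ 1 / 2)
    (hψbar_ge : ∀ k < N, 1 / 2 ≤ ψbar k)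
    (hMnn : ∀ k < N, ∀ γ ∈ Set.Icc (0 : ℝ) (1 / 2), 0 ≤ M k γ)
    (γ : ℕ → ℝ) (hγ : ∀ k < N, γ k ∈ Set.Icc (0 : ℝ) (1 / 2))
    (R : ℕ → ℝ)
    (hRN : R N = 0)
    (hR : ∀ k < N, R k = (1 - γ k) ^ 2 * γ k + R (k + 1) * M k (γ k)) :
    R 0 ≤ Q 0 :=
  stmt_9_general N μa Sa Ga μb Sb Gb M hM Q A B C D ψ ψbar hQN hA hB hC hD hψ hψbar hQ hApos hDnn
    hψbar_ge hMnn γ hγ R hRN hR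
end
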